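/- Elementary step of the positive commutator estimate in finite dimensions: let P, Q be self-adjoint matrices (Q ≥ 0), and suppose i[P, Q²] = -B*B + E + hF as matrices. Then for any u with (P - λ)u = f and Im λ ≥ 0: ‖Bu‖² ≤ ⟨Eu, u⟩ + h⟨Fu, u⟩ + 2‖Q²f‖·‖u‖. -/

import Mathlib

/-!
Pair the identity with `u` and take real parts. For self-adjoint `P` and `S = Q²` the commutator
term gives `re ⟪i[P, S] u, u⟫ = 2 Im ⟪S u, P u⟫`, so
`‖B u‖² = re ⟪E u, u⟫ + h re ⟪F u, u⟫ - 2 Im ⟪S u, P u⟫`.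
Substituting `P u = λ u + f`, and using that `⟪S u, u⟫ = ‖Q u‖² ≥ 0` is real,
`Im ⟪S u, P u⟫ = Im λ ‖Q u‖² + Im ⟪u, S f⟫ ≥ -‖S f‖ ‖u‖` because `Im λ ≥ 0`.
-/

open ContinuousLinearMap Complex
open scoped InnerProductSpace ComplexConjugate

section Commutator

variable {H : Type*} [NormedAddCommGroup H] [InnerProductSpace ℂ H]

theorem inner_commutator_apply_self {P S : H →L[ℂ] H} (hP : (P : H →ₗ[ℂ] H).IsSymmetric)
    (hS : (S : H →ₗ[ℂ] H).IsSymmetric) (u : H) :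
    ⟪(P ∘L S - S ∘L P) u, u⟫_ℂ = ⟪S u, P u⟫_ℂ - conj ⟪S u, P u⟫_ℂ := by
  have hPS : ⟪P (S u), u⟫_ℂ = ⟪S u, P u⟫_ℂ := hP (S u) u
  have hSP : ⟪S (P u), u⟫_ℂ = conj ⟪S u, P u⟫_ℂ := by
    rw [← inner_conj_symm]
    exact congrArg conj (hS u (P u)).symm
  rw [sub_apply, comp_apply, comp_apply, inner_sub_left, hPS, hSP]

theorem re_inner_I_smul_commutator_apply_self {P S : H →L[ℂ] H}
    (hP : (P : H →ₗ[ℂ] H).IsSymmetric) (hS : (S : H →ₗ[ℂ] H).IsSymmetric) (u : H) :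
    (⟪(I • (P ∘L S - S ∘L P)) u, u⟫_ℂ).re = 2 * (⟪S u, P u⟫_ℂ).im := by
  rw [smul_apply, inner_smul_left, inner_commutator_apply_self hP hS, sub_conj]
  simp

theorem neg_norm_mul_norm_le_im_inner_smul_add {S : H →L[ℂ] H} (hS : S.IsPositive) {lam : ℂ}
    (hlam : 0 ≤ lam.im) (u f : H) :
    -(‖S f‖ * ‖u‖) ≤ (⟪S u, lam • u + f⟫_ℂ).im := by
  have hlam_term : 0 ≤ (lam * ⟪S u, u⟫_ℂ).im := by
    have hreal : (⟪S u, u⟫_ℂ).im = 0 := hS.isSymmetric.im_inner_apply_self u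
    rw [mul_im, hreal, mul_zero, zero_add]
    exact mul_nonneg hlam (hS.re_inner_nonneg_left u)
  have hf_term : -(‖S f‖ * ‖u‖) ≤ (⟪u, S f⟫_ℂ).im :=
    calc -(‖S f‖ * ‖u‖) = -(‖u‖ * ‖S f‖) := by ring
      _ ≤ -‖⟪u, S f⟫_ℂ‖ := neg_le_neg (norm_inner_le_norm u (S f))
      _ ≤ (⟪u, S f⟫_ℂ).im := neg_le_of_abs_le (abs_im_le_norm _)
  rw [inner_add_right, inner_smul_right, hS.inner_left_eq_inner_right u f, add_im]
  linarith

end Commutator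

theorem re_inner_neg_adjoint_comp_self_add_apply_self {H : Type*} [NormedAddCommGroup H]
    [InnerProductSpace ℂ H] [CompleteSpace H] (B E F : H →L[ℂ] H) (h : ℝ) (u : H) :
    (⟪(-(adjoint B ∘L B) + E + (h : ℂ) • F) u, u⟫_ℂ).re
      = -‖B u‖ ^ 2 + (⟪E u, u⟫_ℂ).re + h * (⟪F u, u⟫_ℂ).re := by
  simp only [add_apply, neg_apply, smul_apply, comp_apply, inner_add_left, inner_neg_left,
    inner_smul_left, adjoint_inner_left, inner_self_eq_norm_sq_to_K, add_re, neg_re,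
    conj_ofReal, re_ofReal_mul]
  norm_cast

theorem positive_commutator_finite_dim_general
    {H : Type*} [NormedAddCommGroup H] [InnerProductSpace ℂ H] [FiniteDimensional ℂ H]
    (P Q B E F : H →L[ℂ] H)
    (hP : ContinuousLinearMap.adjoint P = P)
    (hQ : ContinuousLinearMap.adjoint Q = Q)
    (h : ℝ)
    (hid : Complex.I • (P ∘L Q ∘L Q - Q ∘L Q ∘L P)
        = -(ContinuousLinearMap.adjoint B ∘L B) + E + (h:ℂ) • F)
    (lam : ℂ) (hlam : 0 ≤ lam.im)
    (u f : H) (hf : P u - lam • u = f) :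
    ‖B u‖^2 ≤ (inner ℂ (E u) u : ℂ).re + h * (inner ℂ (F u) u : ℂ).re
      + 2 * ‖Q (Q f)‖ * ‖u‖ := by
  have hQQ : (Q ∘L Q).IsPositive := by
    simpa only [hQ] using isPositive_adjoint_comp_self Q
  have hPu : P u = lam • u + f := by rw [← hf, add_sub_cancel]
  have hcomm := re_inner_I_smul_commutator_apply_self
    (isSelfAdjoint_iff'.mpr hP).isSymmetric hQQ.isSymmetric u
  rw [comp_assoc, hid, re_inner_neg_adjoint_comp_self_add_apply_self, hPu] at hcomm
  have hbound := neg_norm_mul_norm_le_im_inner_smul_add hQQ hlam u f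
  rw [comp_apply] at hbound
  linarith

theorem positive_commutator_finite_dim
    {H : Type*} [NormedAddCommGroup H] [InnerProductSpace ℂ H] [FiniteDimensional ℂ H]
    (P Q B E F : H →L[ℂ] H)
    (hP : ContinuousLinearMap.adjoint P = P)
    (hQ : ContinuousLinearMap.adjoint Q = Q)
    (hE : ContinuousLinearMap.adjoint E = E)
    (hF : ContinuousLinearMap.adjoint F = F)
    (h : ℝ) (hh : 0 < h)
    (hid : Complex.I • (P ∘L Q ∘L Q - Q ∘L Q ∘L P)
        = -(ContinuousLinearMap.adjoint B ∘L B) + E + (h:ℂ) • F)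
    (lam : ℂ) (hlam : 0 ≤ lam.im)
    (u f : H) (hf : P u - lam • u = f) :
    ‖B u‖^2 ≤ (inner ℂ (E u) u : ℂ).re + h * (inner ℂ (F u) u : ℂ).re
      + 2 * ‖Q (Q f)‖ * ‖u‖ :=
  positive_commutator_finite_dim_general P Q B E F hP hQ h hid lam hlam u f hf
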